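/- For every ℓ ≥ 1, with S_n := #{i : b_i < a_n}, the identity a_n = ℓ + 1 + n + S_n holds for all n ≥ 0, for the sequences defined by the mex recursion. -/

import Mathlib

/-- The minimum excluded value of a set of natural numbers. -/
noncomputable def mex (S : Set ℕ) : ℕ := sInf {m : ℕ | m ∉ S}

/-- `MexSeq ℓ a b` says that `a`, `b` are the sequences defined by
    `a 0 = ℓ+1`, `b 0 = 2ℓ+2`, and for `n ≥ 1`:
    `a n = mex({a i, b i : i < n} ∪ {0,…,ℓ})`, `b n = a n + n + ℓ + 1`. -/
def MexSeq (ℓ : ℕ) (a b : ℕ → ℕ) : Prop :=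
  a 0 = ℓ + 1 ∧ b 0 = 2 * ℓ + 2 ∧
  (∀ n : ℕ, 1 ≤ n →
    a n = mex ({m : ℕ | ∃ i < n, m = a i ∨ m = b i} ∪ {m : ℕ | m ≤ ℓ})) ∧
  (∀ n : ℕ, 1 ≤ n → b n = a n + n + ℓ + 1)

/-!
Every `a i` exceeds `ℓ`, the sequence `a` is strictly increasing, and the values of `a`, `b` and
`{0, …, ℓ}` are pairwise disjoint. By the mex rule, every number below `a n` is one of them, so
`a n = #{0, …, a n - 1} = (ℓ + 1) + #{i | a i < a n} + #{i | b i < a n}`, and the middle count is `n`.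
-/

open Set

theorem mex_notMem {S : Set ℕ} (hS : S.Finite) : mex S ∉ S :=
  Nat.sInf_mem hS.infinite_compl.nonempty

theorem mem_of_lt_mex {S : Set ℕ} {m : ℕ} (hm : m < mex S) : m ∈ S :=
  not_not.mp (Nat.notMem_of_lt_sInf hm)

theorem eq_add_ncard_add_ncard_of_partition {ℓ N : ℕ} {a b : ℕ → ℕ} (hN : ℓ < N)
    (ha : a.Injective) (hb : b.Injective) (hab : ∀ i j, a i ≠ b j)
    (hℓa : ∀ i, ℓ < a i) (hℓb : ∀ i, ℓ < b i)
    (hcover : ∀ m < N, m ≤ ℓ ∨ m ∈ range a ∨ m ∈ range b) :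
    N = ℓ + 1 + {i | a i < N}.ncard + {i | b i < N}.ncard := by
  have hsplit : Iio N = Iic ℓ ∪ (a '' {i | a i < N} ∪ b '' {i | b i < N}) := by
    ext m
    simp only [mem_Iio, mem_union, mem_Iic, mem_image, mem_ofPred_eq]
    constructor
    · intro hm
      rcases hcover m hm with h | ⟨i, rfl⟩ | ⟨i, rfl⟩
      · exact Or.inl h
      · exact Or.inr (Or.inl ⟨i, hm, rfl⟩)
      · exact Or.inr (Or.inr ⟨i, hm, rfl⟩)
    · rintro (h | ⟨i, hi, rfl⟩ | ⟨i, hi, rfl⟩) <;> omega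
  have hfin_a : (a '' {i | a i < N}).Finite :=
    (finite_Iio N).subset (by rintro _ ⟨i, hi, rfl⟩; exact hi)
  have hfin_b : (b '' {i | b i < N}).Finite :=
    (finite_Iio N).subset (by rintro _ ⟨i, hi, rfl⟩; exact hi)
  have hdisj_ab : Disjoint (a '' {i | a i < N}) (b '' {i | b i < N}) := by
    rw [disjoint_left]
    rintro _ ⟨i, -, rfl⟩ ⟨j, -, h⟩
    exact hab i j h.symm
  have hdisj_ℓ : Disjoint (Iic ℓ) (a '' {i | a i < N} ∪ b '' {i | b i < N}) := by
    rw [disjoint_left]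
    rintro m hm (⟨i, -, rfl⟩ | ⟨i, -, rfl⟩)
    · exact (hℓa i).not_ge hm
    · exact (hℓb i).not_ge hm
  have hcard := congrArg ncard hsplit
  rw [ncard_union_eq hdisj_ℓ (finite_Iic ℓ) (hfin_a.union hfin_b), ncard_union_eq hdisj_ab hfin_a hfin_b,
    ncard_image_of_injective _ ha, ncard_image_of_injective _ hb, ncard_Iio_nat, ncard_Iic_nat] at hcard
  omega

namespace MexSeq

def excluded (ℓ : ℕ) (a b : ℕ → ℕ) (n : ℕ) : Set ℕ :=
  {m : ℕ | ∃ i < n, m = a i ∨ m = b i} ∪ {m : ℕ | m ≤ ℓ}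

theorem excluded_finite (ℓ : ℕ) (a b : ℕ → ℕ) (n : ℕ) : (excluded ℓ a b n).Finite := by
  refine (((finite_Iio n).image a).union ((finite_Iio n).image b)).union (finite_Iic ℓ) |>.subset ?_
  rintro m (⟨i, hi, rfl | rfl⟩ | hm)
  · exact Or.inl (Or.inl ⟨i, hi, rfl⟩)
  · exact Or.inl (Or.inr ⟨i, hi, rfl⟩)
  · exact Or.inr hm

theorem excluded_mono (ℓ : ℕ) (a b : ℕ → ℕ) : Monotone (excluded ℓ a b) := by
  rintro n n' hnn' m (⟨i, hi, h⟩ | hm)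
  · exact Or.inl ⟨i, hi.trans_le hnn', h⟩
  · exact Or.inr hm

variable {ℓ : ℕ} {a b : ℕ → ℕ}

theorem b_eq (h : MexSeq ℓ a b) (n : ℕ) : b n = a n + n + ℓ + 1 := by
  rcases Nat.eq_zero_or_pos n with rfl | hn
  · rw [h.1, h.2.1]; ring
  · exact h.2.2.2 n hn

theorem a_notMem_excluded (h : MexSeq ℓ a b) {n : ℕ} (hn : 1 ≤ n) : a n ∉ excluded ℓ a b n := by
  rw [h.2.2.1 n hn]
  exact mex_notMem (excluded_finite ℓ a b n)

theorem mem_excluded_of_lt (h : MexSeq ℓ a b) {n m : ℕ} (hm : m < a n) : m ∈ excluded ℓ a b n := by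
  rcases Nat.eq_zero_or_pos n with rfl | hn
  · rw [h.1] at hm
    exact Or.inr (Nat.le_of_lt_succ hm)
  · rw [h.2.2.1 n hn] at hm
    exact mem_of_lt_mex hm

theorem lt_a (h : MexSeq ℓ a b) (n : ℕ) : ℓ < a n := by
  rcases Nat.eq_zero_or_pos n with rfl | hn
  · rw [h.1]; exact Nat.lt_succ_self ℓ
  · by_contra hle
    exact h.a_notMem_excluded hn (Or.inr (not_lt.mp hle))

theorem lt_b (h : MexSeq ℓ a b) (n : ℕ) : ℓ < b n := by
  have := h.b_eq n
  omega

theorem strictMono_a (h : MexSeq ℓ a b) : StrictMono a := by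
  refine strictMono_nat_of_lt_succ fun n => ?_
  have hnotMem := h.a_notMem_excluded (Nat.succ_pos n)
  rcases lt_trichotomy (a (n + 1)) (a n) with hlt | heq | hgt
  · exact absurd (excluded_mono ℓ a b n.le_succ (h.mem_excluded_of_lt hlt)) hnotMem
  · exact absurd (Or.inl ⟨n, n.lt_succ_self, Or.inl heq⟩) hnotMem
  · exact hgt

theorem strictMono_b (h : MexSeq ℓ a b) : StrictMono b := by
  intro i j hij
  have := h.strictMono_a hij
  rw [h.b_eq i, h.b_eq j]
  omega

theorem a_ne_b (h : MexSeq ℓ a b) (i j : ℕ) : a i ≠ b j := by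
  intro hij
  rcases lt_or_ge j i with hji | hij'
  · exact h.a_notMem_excluded (Nat.one_le_of_lt hji) (Or.inl ⟨j, hji, Or.inr hij⟩)
  · have := h.strictMono_a.monotone hij'
    have := h.b_eq j
    omega

theorem cover_of_lt_a (h : MexSeq ℓ a b) {n m : ℕ} (hm : m < a n) :
    m ≤ ℓ ∨ m ∈ range a ∨ m ∈ range b := by
  rcases h.mem_excluded_of_lt hm with ⟨i, -, rfl | rfl⟩ | hle
  · exact Or.inr (Or.inl ⟨i, rfl⟩)
  · exact Or.inr (Or.inr ⟨i, rfl⟩)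
  · exact Or.inl hle

end MexSeq

theorem mexSeq_count_identity_general (ℓ : ℕ) (a b : ℕ → ℕ)
    (hab : MexSeq ℓ a b) :
    ∀ n : ℕ, a n = ℓ + 1 + n + Set.ncard {i : ℕ | b i < a n} := by
  intro n
  have hcount := eq_add_ncard_add_ncard_of_partition (hab.lt_a n) hab.strictMono_a.injective
    hab.strictMono_b.injective hab.a_ne_b hab.lt_a hab.lt_b fun _ => hab.cover_of_lt_a
  have hbelow : {i | a i < a n} = Iio n := by
    ext i
    exact hab.strictMono_a.lt_iff_lt
  rwa [hbelow, ncard_Iio_nat] at hcount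

theorem mexSeq_count_identity (ℓ : ℕ) (hℓ : 1 ≤ ℓ) (a b : ℕ → ℕ)
    (hab : MexSeq ℓ a b) :
    ∀ n : ℕ, a n = ℓ + 1 + n + Set.ncard {i : ℕ | b i < a n} :=
  mexSeq_count_identity_general ℓ a b hab
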